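/- arXiv:2105.08160 — 7 statements merged into one kernel-verified Lean document; each statement's English description precedes it below -/
import Mathlib

section
/- If A is an integer m×n matrix with rank m whose m×m minors all have absolute value at most 2 (a bimodular matrix), and A contains a non-primitive column, then that column equals 2a for some integer vector a; moreover A contains at most one non-primitive column (up to sign). -/
/-- `A` has differing columns: no column is zero and no two columns are equal
or negatives of each other. -/
def DiffCols {m n : ℕ} (A : Matrix (Fin m) (Fin n) ℤ) : Prop :=
  (∀ j, (fun i => A i j) ≠ 0) ∧
  ∀ j j' : Fin n, j ≠ j' →
    (fun i => A i j) ≠ (fun i => A i j') ∧ (fun i => A i j) ≠ (fun i => -A i j')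

/-- `A` is `Δ`-modular: every `m × m` minor has absolute value at most `Δ`. -/
def DMod {m n : ℕ} (A : Matrix (Fin m) (Fin n) ℤ) (Δ : ℤ) : Prop :=
  ∀ g : Fin m → Fin n, |(A.submatrix id g).det| ≤ Δ

/-- A primitive integer vector: the gcd of its entries is a unit. -/
def IsPrimitiveVec {m : ℕ} (v : Fin m → ℤ) : Prop :=
  ∀ d : ℤ, (∀ i, d ∣ v i) → IsUnit d

/-! Any linearly independent set of columns of a full-rank matrix extends to a non-singular
`m × m` minor. A common divisor `d` of a non-zero column divides such a minor through that
column, so `|d| ≤ 2` and a non-primitive column is `2a` with `a` primitive. Two independent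
even columns would give a non-zero minor divisible by `4`; so two non-primitive columns `2a`, `2b`
are dependent, and dependent primitive vectors agree up to sign. -/

open Matrix Submodule Set

namespace Matrix

theorem pow_card_dvd_det_of_dvd_cols {R n : Type*} [CommRing R] [Fintype n] [DecidableEq n]
    (M : Matrix n n R) (S : Finset n) (c : R) (h : ∀ i, ∀ k ∈ S, c ∣ M i k) :
    c ^ S.card ∣ M.det := by
  have hfac : ∀ i k, ∃ x, M i k = x * if k ∈ S then c else 1 := by
    intro i k
    split_ifs with hk
    · obtain ⟨x, hx⟩ := h i k hk
      exact ⟨x, by rw [hx, mul_comm]⟩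
    · exact ⟨M i k, (mul_one _).symm⟩
  choose N hN using hfac
  have hM : M = of N * diagonal fun k => if k ∈ S then c else 1 := by
    ext i k
    rw [mul_diagonal, of_apply, hN]
  rw [hM, det_mul, det_diagonal, Finset.prod_ite_mem, Finset.univ_inter, Finset.prod_const]
  exact dvd_mul_left _ _

theorem exists_det_submatrix_ne_zero {K m n : Type*} [Field K] [Fintype m] [DecidableEq m]
    [Fintype n] (B : Matrix m n K) (hB : B.rank = Fintype.card m) {s : Set n}
    (hs : LinearIndepOn K B.col s) :
    ∃ g : m → n, s ⊆ range g ∧ (B.submatrix id g).det ≠ 0 := by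
  obtain ⟨b, -, hsb, hspan, hb⟩ := exists_linearIndepOn_extension hs (subset_univ s)
  have hcols : span K (range B.col) = ⊤ := by
    apply Submodule.eq_top_of_finrank_eq
    rw [← rank_eq_finrank_span_cols, hB, Module.finrank_fintype_fun_eq_card]
  have htop : ⊤ ≤ span K (range fun k : b => B.col k) := by
    rw [← image_eq_range, ← hcols, ← image_univ]
    exact span_le.mpr hspan
  let basis : Module.Basis b K (m → K) := .mk hb htop
  have : Fintype b := FiniteDimensional.fintypeBasisIndex basis
  let e : m ≃ b := Fintype.equivOfCardEq <| by
    rw [← Module.finrank_eq_card_basis basis, Module.finrank_fintype_fun_eq_card]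
  refine ⟨fun k => e k, fun j hj => ⟨e.symm ⟨j, hsb hj⟩, by simp⟩, ?_⟩
  have hli : LinearIndependent K (B.submatrix id fun k => (e k : n)).col :=
    hb.comp e e.injective
  exact ((isUnit_iff_isUnit_det _).mp (linearIndependent_cols_iff_isUnit.mp hli)).ne_zero

section FractionRing

variable {R m n : Type*} [CommRing R] [IsDomain R] [IsPrincipalIdealRing R] [Fintype m] [Fintype n]

theorem rank_le_rank_map_algebraMap (K : Type*) [Field K] [Algebra R K] [IsFractionRing R K]
    (A : Matrix m n R) :
    A.rank ≤ (A.map (algebraMap R K)).rank := by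
  let f : (m → R) →ₗ[R] (m → K) := (Algebra.linearMap R K).compLeft m
  have hf : Function.Injective f := (IsFractionRing.injective R K).comp_left
  -- an `R`-basis of the (free) column span stays independent over `K`
  let N := span R (range A.col)
  let b := Module.Free.chooseBasis R N
  let v := fun k => f (b k)
  have hv : LinearIndependent K v := by
    rw [← LinearIndependent.iff_fractionRing R K]
    exact (b.linearIndependent.map' N.subtype N.ker_subtype).map' f (LinearMap.ker_eq_bot.mpr hf)
  have hvA : range v ⊆ span K (range (A.map (algebraMap R K)).col) := by
    rintro _ ⟨k, rfl⟩
    have hk : f (b k) ∈ N.map f := mem_map_of_mem (b k).2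
    rw [map_span, ← range_comp] at hk
    exact span_le_restrictScalars R K _ hk
  rw [rank_eq_finrank_span_cols, Module.finrank_eq_card_chooseBasisIndex, rank_eq_finrank_span_cols,
    ← finrank_span_eq_card hv]
  exact Submodule.finrank_mono (span_le.mpr hvA)

theorem exists_det_submatrix_ne_zero_of_isPrincipalIdealRing [DecidableEq m] (A : Matrix m n R)
    (hA : A.rank = Fintype.card m) {s : Set n} (hs : LinearIndepOn R A.col s) :
    ∃ g : m → n, s ⊆ range g ∧ (A.submatrix id g).det ≠ 0 := by
  let K := FractionRing R
  let f : (m → R) →ₗ[R] (m → K) := (Algebra.linearMap R K).compLeft m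
  have hf : Function.Injective f := (IsFractionRing.injective R K).comp_left
  have hB : (A.map (algebraMap R K)).rank = Fintype.card m :=
    le_antisymm (rank_le_card_height _) (hA ▸ rank_le_rank_map_algebraMap K A)
  have hsK : LinearIndepOn K (A.map (algebraMap R K)).col s := by
    rw [LinearIndepOn, ← LinearIndependent.iff_fractionRing R K]
    exact hs.map' f (LinearMap.ker_eq_bot.mpr hf)
  obtain ⟨g, hsg, hdet⟩ := exists_det_submatrix_ne_zero _ hB hsK
  refine ⟨g, hsg, fun h => hdet ?_⟩
  rw [submatrix_map, ← RingHom.mapMatrix_apply, ← RingHom.map_det, h, map_zero]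

end FractionRing

end Matrix

theorem DMod.abs_pow_card_le {m n : ℕ} {A : Matrix (Fin m) (Fin n) ℤ} {Δ : ℤ}
    (hmod : DMod A Δ) (hrank : A.rank = m) {s : Finset (Fin n)}
    (hs : LinearIndepOn ℤ A.col (s : Set (Fin n))) {c : ℤ}
    (hc : ∀ j ∈ s, ∀ i, c ∣ A i j) : |c| ^ s.card ≤ Δ := by
  obtain ⟨g, hsg, hdet⟩ :=
    exists_det_submatrix_ne_zero_of_isPrincipalIdealRing A (by simpa using hrank) hs
  let S := Finset.univ.filter fun k => g k ∈ s
  have hcard : s.card ≤ S.card := by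
    refine le_trans (Finset.card_le_card (t := S.image g) fun j hj => ?_) Finset.card_image_le
    obtain ⟨k, rfl⟩ := hsg hj
    exact Finset.mem_image_of_mem g (by simpa [S] using hj)
  have hdvd : c ^ s.card ∣ (A.submatrix id g).det :=
    (pow_dvd_pow c hcard).trans <| pow_card_dvd_det_of_dvd_cols _ S c fun i k hk =>
      hc (g k) (by simpa [S] using hk) i
  calc |c| ^ s.card = |c ^ s.card| := (abs_pow c _).symm
    _ ≤ |(A.submatrix id g).det| := Int.le_of_dvd (abs_pos.mpr hdet) ((abs_dvd_abs _ _).mpr hdvd)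
    _ ≤ Δ := hmod g

theorem DMod.abs_le_of_dvd_col {m n : ℕ} {A : Matrix (Fin m) (Fin n) ℤ} {Δ : ℤ}
    (hmod : DMod A Δ) (hrank : A.rank = m) {j : Fin n} (hj : A.col j ≠ 0) {d : ℤ}
    (hd : ∀ i, d ∣ A i j) : |d| ≤ Δ := by
  have hli : LinearIndepOn ℤ A.col (({j} : Finset (Fin n)) : Set (Fin n)) := by
    rw [Finset.coe_singleton, linearIndepOn_singleton_iff]
    exact hj
  simpa using hmod.abs_pow_card_le hrank hli (by simpa using hd)

theorem exists_isPrimitiveVec_eq_two_smul {m : ℕ} {v : Fin m → ℤ} (hv : v ≠ 0)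
    (hdiv : ∀ d : ℤ, (∀ i, d ∣ v i) → |d| ≤ 2) (hnp : ¬ IsPrimitiveVec v) :
    ∃ a, IsPrimitiveVec a ∧ v = 2 • a := by
  have hne : ∀ d : ℤ, (∀ i, d ∣ v i) → d ≠ 0 := by
    rintro d hd rfl
    exact hv (funext fun i => zero_dvd_iff.mp (hd i))
  obtain ⟨d, hd, hdu⟩ : ∃ d : ℤ, (∀ i, d ∣ v i) ∧ ¬ IsUnit d := by
    simpa [IsPrimitiveVec] using hnp
  have hd2 : |d| = 2 := by
    have hle := hdiv d hd
    have hd0 := hne d hd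
    rw [Int.isUnit_iff] at hdu
    rcases abs_cases d with h | h <;> omega
  have h2 : ∀ i, ∃ a, v i = 2 * a := fun i => by
    rw [← hd2]
    exact (abs_dvd _ _).mpr (hd i)
  choose a ha using h2
  refine ⟨a, fun e he => ?_, funext ha⟩
  have h2e : ∀ i, 2 * e ∣ v i := fun i => by
    rw [ha]
    exact mul_dvd_mul_left 2 (he i)
  have hle := hdiv _ h2e
  have he0 := hne _ h2e
  rw [abs_mul, abs_two] at hle
  rw [Int.isUnit_iff]
  rcases abs_cases e with h | h <;> omega

theorem IsPrimitiveVec.eq_or_eq_neg_of_smul_add_smul_eq_zero {m : ℕ} {a b : Fin m → ℤ}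
    (ha : IsPrimitiveVec a) (hb : IsPrimitiveVec b) {s t : ℤ} (h : s • a + t • b = 0)
    (hst : ¬(s = 0 ∧ t = 0)) : a = b ∨ a = -b := by
  obtain ⟨g, s, t, hg, hcop, rfl, rfl⟩ := Int.exists_gcd_one' (Int.gcd_pos_iff.mpr (by tauto))
  have hcop : IsCoprime s t := Int.isCoprime_iff_gcd_eq_one.mpr hcop
  have hrel : ∀ i, s * a i = t * -b i := by
    intro i
    have hi := congrFun h i
    simp only [Pi.add_apply, Pi.smul_apply, smul_eq_mul, Pi.zero_apply] at hi
    have : (g : ℤ) * (s * a i + t * b i) = 0 := by linarith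
    have := (mul_eq_zero.mp this).resolve_left (by positivity)
    linarith
  have hs : IsUnit s := hb s fun i => by
    rw [← dvd_neg]
    exact hcop.dvd_of_dvd_mul_left ⟨a i, (hrel i).symm⟩
  have ht : IsUnit t := ha t fun i => hcop.symm.dvd_of_dvd_mul_left ⟨-b i, hrel i⟩
  rcases Int.isUnit_iff.mp hs with rfl | rfl <;> rcases Int.isUnit_iff.mp ht with rfl | rfl
  · right; funext i; rw [Pi.neg_apply]; linarith [hrel i]
  · left; funext i; linarith [hrel i]
  · left; funext i; linarith [hrel i]
  · right; funext i; rw [Pi.neg_apply]; linarith [hrel i]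

theorem DMod.exists_smul_add_smul_eq_zero {m n : ℕ} {A : Matrix (Fin m) (Fin n) ℤ} {Δ : ℤ}
    (hmod : DMod A Δ) (hrank : A.rank = m) {c : ℤ} (hΔ : Δ < c ^ 2) {j j' : Fin n}
    (hjj : j ≠ j') (hj : ∀ i, c ∣ A i j) (hj' : ∀ i, c ∣ A i j') :
    ∃ s t : ℤ, s • A.col j + t • A.col j' = 0 ∧ ¬(s = 0 ∧ t = 0) := by
  by_contra! hind
  have hli : LinearIndepOn ℤ A.col ((({j, j'} : Finset (Fin n)) : Set (Fin n))) := by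
    rw [Finset.coe_pair, LinearIndepOn.pair_iff _ hjj]
    exact hind
  have hle := hmod.abs_pow_card_le hrank hli (c := c) (by simp [hj, hj'])
  rw [Finset.card_pair hjj, sq_abs] at hle
  exact hle.not_gt hΔ

theorem stmt0 {m n : ℕ} (A : Matrix (Fin m) (Fin n) ℤ)
    (hrank : A.rank = m) (hmod : DMod A 2) (hdiff : DiffCols A) :
    (∀ j : Fin n, ¬ IsPrimitiveVec (fun i => A i j) →
      ∃ a : Fin m → ℤ, (fun i => A i j) = fun i => 2 * a i) ∧
    (∀ j j' : Fin n, ¬ IsPrimitiveVec (fun i => A i j) →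
      ¬ IsPrimitiveVec (fun i => A i j') →
      (fun i => A i j) = (fun i => A i j') ∨
        (fun i => A i j) = (fun i => -A i j')) := by
  have heven (j : Fin n) (hj : ¬ IsPrimitiveVec (fun i => A i j)) :
      ∃ a, IsPrimitiveVec a ∧ A.col j = 2 • a :=
    exists_isPrimitiveVec_eq_two_smul (hdiff.1 j)
      (fun d hd => hmod.abs_le_of_dvd_col hrank (hdiff.1 j) hd) hj
  refine ⟨fun j hj => ?_, fun j j' hj hj' => ?_⟩
  · obtain ⟨a, -, ha⟩ := heven j hj
    exact ⟨a, ha⟩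
  obtain ⟨a, ha, hja⟩ := heven j hj
  obtain ⟨b, hb, hjb⟩ := heven j' hj'
  rcases eq_or_ne j j' with rfl | hjj
  · exact Or.inl rfl
  obtain ⟨s, t, hst, hne⟩ := hmod.exists_smul_add_smul_eq_zero hrank (by norm_num) hjj
    (fun i => ⟨a i, congrFun hja i⟩) (fun i => ⟨b i, congrFun hjb i⟩)
  have hab : s • a + t • b = 0 := by
    rw [hja, hjb, smul_comm s, smul_comm t, ← smul_add] at hst
    exact (smul_eq_zero.mp hst).resolve_left two_ne_zero
  rcases ha.eq_or_eq_neg_of_smul_add_smul_eq_zero hb hab hne with rfl | rfl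
  · exact Or.inl (hja.trans hjb.symm)
  · right
    change A.col j = -A.col j'
    rw [hja, hjb, smul_neg]
end

section
/- Let A ∈ Z^{m×n} be a bimodular matrix of rank m with differing columns. If a ∈ Z^m lies in the convex hull of the columns of A together with their negatives and the zero vector, then the matrix obtained by appending the column a to A is still bimodular. -/
theorem LinearMap.abs_le_of_mem_convexHull {K E : Type*} [Field K] [LinearOrder K]
    [IsStrictOrderedRing K] [AddCommGroup E] [Module K E] (f : E →ₗ[K] K) {S : Set E} {Δ : K}
    (hS : ∀ v ∈ S, |f v| ≤ Δ) {x : E} (hx : x ∈ convexHull K S) : |f x| ≤ Δ := by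
  have hconv : Convex K (f ⁻¹' Set.Icc (-Δ) Δ) := (convex_Icc _ _).linear_preimage f
  exact abs_le.mpr (convexHull_min (fun v hv => abs_le.mp (hS v hv)) hconv hx)

theorem Matrix.abs_det_updateCol_le_of_mem_convexHull {K o : Type*} [Field K] [LinearOrder K]
    [IsStrictOrderedRing K] [Fintype o] [DecidableEq o] (B : Matrix o o K) (k : o)
    {S : Set (o → K)} {Δ : K} (hS : ∀ v ∈ S, |(B.updateCol k v).det| ≤ Δ) {x : o → K}
    (hx : x ∈ convexHull K S) : |(B.updateCol k x).det| ≤ Δ := by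
  have hf : ∀ v, (LinearMap.proj k ∘ₗ B.cramer) v = (B.updateCol k v).det :=
    fun v => B.cramer_apply v k
  rw [← hf]
  exact (LinearMap.proj k ∘ₗ B.cramer).abs_le_of_mem_convexHull (fun v hv => hf v ▸ hS v hv) hx

theorem Matrix.updateCol_submatrix_col {α l m n : Type*} [DecidableEq n] (C : Matrix l m α)
    (g : n → m) (k : n) (j : m) :
    (C.submatrix id g).updateCol k (fun i => C i j) = C.submatrix id (Function.update g k j) := by
  ext i l
  by_cases hl : l = k
  · subst hl; simp
  · simp [hl]

theorem Int.cast_det_updateCol {R o : Type*} [CommRing R] [Fintype o] [DecidableEq o]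
    (M : Matrix o o ℤ) (k : o) (v : o → ℤ) :
    ((M.updateCol k v).det : R) = ((M.map (↑)).updateCol k (fun i => (v i : R))).det := by
  rw [Int.cast_det, Matrix.map_updateCol]
  rfl

namespace DMod

variable {m n : ℕ} {A : Matrix (Fin m) (Fin n) ℤ} {Δ : ℤ}

theorem abs_det_submatrix_cons_le (hmod : DMod A Δ) (a : Fin m → ℤ) (g : Fin m → Fin (n+1))
    (hg : ∀ l, g l ≠ 0) :
    |((Matrix.of fun i (j : Fin (n+1)) =>
      (Fin.cons (a i) (A i) : Fin (n+1) → ℤ) j).submatrix id g).det| ≤ Δ := by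
  have hsub : (Matrix.of fun i (j : Fin (n+1)) =>
      (Fin.cons (a i) (A i) : Fin (n+1) → ℤ) j).submatrix id g =
      A.submatrix id fun l => (g l).pred (hg l) := by
    ext i l
    simp only [Matrix.submatrix_apply, Matrix.of_apply, id]
    conv_lhs => rw [← Fin.succ_pred (g l) (hg l)]
    rfl
  rw [hsub]
  exact hmod _

theorem abs_det_submatrix_cons_le_of_mem_convexHull (hmod : DMod A Δ) (hΔ : 0 ≤ Δ) {a : Fin m → ℤ}
    (ha : (fun i => (a i : ℝ)) ∈ convexHull ℝ
      (({0} : Set (Fin m → ℝ)) ∪ {x | ∃ j, x = fun i => (A i j : ℝ)} ∪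
        {x | ∃ j, x = fun i => -(A i j : ℝ)}))
    {g : Fin m → Fin (n+1)} {k : Fin m} (hk : g k = 0) (hk_unique : ∀ l, g l = 0 → l = k) :
    |((Matrix.of fun i (j : Fin (n+1)) =>
      (Fin.cons (a i) (A i) : Fin (n+1) → ℤ) j).submatrix id g).det| ≤ Δ := by
  set C := Matrix.of fun i (j : Fin (n+1)) => (Fin.cons (a i) (A i) : Fin (n+1) → ℤ) j
  set M := C.submatrix id g
  have hM : M = M.updateCol k a := by
    conv_lhs => rw [← Matrix.updateCol_eq_self M k]
    simp [M, C, hk]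
  have hcol : ∀ j, |((M.map (↑)).updateCol k (fun i => (A i j : ℝ))).det| ≤ Δ := by
    intro j
    have hupd : ∀ l, Function.update g k j.succ l ≠ 0 := by
      intro l
      by_cases hl : l = k
      · simp [hl]
      · simpa [hl] using fun h => hl (hk_unique l h)
    rw [← Int.cast_det_updateCol, show (fun i => A i j) = fun i => C i j.succ by simp [C],
      Matrix.updateCol_submatrix_col]
    exact_mod_cast hmod.abs_det_submatrix_cons_le a _ hupd
  have hreal : |((M.map (↑)).updateCol k (fun i => (a i : ℝ))).det| ≤ Δ := by
    refine (M.map (↑)).abs_det_updateCol_le_of_mem_convexHull k ?_ ha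
    rintro v ((rfl | ⟨j, rfl⟩) | ⟨j, rfl⟩)
    · rw [← zero_smul ℝ (0 : Fin m → ℝ), Matrix.det_updateCol_smul, zero_mul, abs_zero]
      exact_mod_cast hΔ
    · exact hcol j
    · rw [show (fun i => -(A i j : ℝ)) = (-1 : ℝ) • fun i => (A i j : ℝ) by ext; simp,
        Matrix.det_updateCol_smul, abs_mul, abs_neg, abs_one, one_mul]
      exact hcol j
  rw [← Int.cast_det_updateCol, ← hM] at hreal
  exact_mod_cast hreal

end DMod

theorem stmt1_general {m n : ℕ} (A : Matrix (Fin m) (Fin n) ℤ)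
    (hmod : DMod A 2)
    (a : Fin m → ℤ)
    (ha : (fun i => (a i : ℝ)) ∈ convexHull ℝ
      (({0} : Set (Fin m → ℝ)) ∪ {x | ∃ j, x = fun i => (A i j : ℝ)} ∪
        {x | ∃ j, x = fun i => -(A i j : ℝ)})) :
    DMod (Matrix.of fun i (j : Fin (n+1)) => (Fin.cons (a i) (A i) : Fin (n+1) → ℤ) j) 2 := by
  intro g
  by_cases hg : ∀ l, g l ≠ 0
  · exact hmod.abs_det_submatrix_cons_le a g hg
  push Not at hg
  obtain ⟨k, hk⟩ := hg
  by_cases hk_unique : ∀ l, g l = 0 → l = k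
  · exact hmod.abs_det_submatrix_cons_le_of_mem_convexHull zero_le_two ha hk hk_unique
  push Not at hk_unique
  obtain ⟨k', hk', hne⟩ := hk_unique
  rw [Matrix.det_zero_of_column_eq hne (fun i => by simp [hk, hk']), abs_zero]
  exact zero_le_two

theorem stmt1 {m n : ℕ} (A : Matrix (Fin m) (Fin n) ℤ)
    (hrank : A.rank = m) (hmod : DMod A 2) (hdiff : DiffCols A)
    (a : Fin m → ℤ)
    (ha : (fun i => (a i : ℝ)) ∈ convexHull ℝ
      (({0} : Set (Fin m → ℝ)) ∪ {x | ∃ j, x = fun i => (A i j : ℝ)} ∪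
        {x | ∃ j, x = fun i => -(A i j : ℝ)})) :
    DMod (Matrix.of fun i (j : Fin (n+1)) => (Fin.cons (a i) (A i) : Fin (n+1) → ℤ) j) 2 :=
  stmt1_general A hmod a ha
end

section
/- Let A ∈ Z^{m×n} be a bimodular matrix of rank m with differing columns whose first column is the standard unit vector e^1. Then for any vector b ∈ Z^{m-1}, the number of integers β such that (β, b) is a column of A is at most 3. -/
/-!
Expanding an `(m+1)`-minor along a first column `γ e₁` gives `γ` times an `m`-minor of the last
`m` rows. These rows have rank `m`, so that minor can be chosen nonsingular, and bimodularity then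
forces `|γ| ≤ 2`. For `b = 0` this applies to the column `(β, 0)` itself; differing columns rule
out `β = 0` and `β = -1` (the column `-e₁`), leaving `β ∈ {1, 2, -2}`. For `b ≠ 0` the nonsingular
minor of the last rows can be chosen to contain the column `(β₂, b)`, and applying the expansion to
`(β₁, b) - (β₂, b) = (β₁ - β₂) e₁` gives `|β₁ - β₂| ≤ 2`, so at most three values of `β` occur.
-/

open Matrix Module Submodule Set

theorem Matrix.rank_map_intCast {m n : Type*} [Fintype n] (A : Matrix m n ℤ) :
    (A.map (Int.cast : ℤ → ℚ)).rank = A.rank := by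
  let cast : (m → ℤ) →ₗ[ℤ] (m → ℚ) := LinearMap.compLeft (Int.castAddHom ℚ).toIntLinearMap m
  have hcast : Function.Injective cast := fun x y hxy =>
    funext fun i => Int.cast_injective (congrFun hxy i)
  have hcols : range (A.map (Int.cast : ℤ → ℚ)).col = cast '' range A.col := by
    rw [← range_comp]; rfl
  have : Module.Finite ℤ (span ℤ (range (A.map (Int.cast : ℤ → ℚ)).col)) :=
    Module.Finite.span_of_finite ℤ (finite_range _)
  rw [rank_eq_finrank_span_cols, rank_eq_finrank_span_cols,
    Submodule.finrank_span_eq_finrank_span ℤ, hcols, ← Submodule.map_span]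
  exact LinearEquiv.finrank_eq (Submodule.equivMapOfInjective cast hcast _).symm

theorem exists_linearIndependent_comp_fin_of_span_eq_top {K V ι : Type*} [Field K]
    [AddCommGroup V] [Module K V] {k : ℕ} [NeZero k] (hk : finrank K V = k) {v : ι → V}
    (hv : span K (range v) = ⊤) {j : ι} (hj : v j ≠ 0) :
    ∃ h : Fin k → ι, h 0 = j ∧ LinearIndependent K (v ∘ h) := by
  have : FiniteDimensional K V := Module.finite_of_finrank_pos (hk ▸ NeZero.pos k)
  obtain ⟨s, -, hjs, hspan, hs⟩ := exists_linearIndepOn_extension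
    ((linearIndepOn_singleton_iff (R := K) (v := v)).mpr hj) (subset_univ {j})
  let B : Basis s K V := .mk hs.linearIndependent <| by
    rw [← hv, ← image_univ, ← image_eq_range, span_le]
    exact hspan
  have : Fintype s := FiniteDimensional.fintypeBasisIndex B
  let e : Fin k ≃ s := (Fintype.equivFinOfCardEq (hk ▸ (finrank_eq_card_basis B).symm)).symm
  let j' : s := ⟨j, hjs rfl⟩
  let e' : Fin k ≃ s := (Equiv.swap 0 (e.symm j')).trans e
  exact ⟨Subtype.val ∘ e', by simp [e', j'], hs.linearIndependent.comp e' e'.injective⟩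

theorem Matrix.det_eq_mul_det_submatrix_succ_of_col_zero {R : Type*} [CommRing R] {k : ℕ}
    (M : Matrix (Fin (k + 1)) (Fin (k + 1)) R) {γ : R} (hM : (fun i => M i 0) = Pi.single 0 γ) :
    M.det = γ * (M.submatrix Fin.succ Fin.succ).det := by
  have hM' := congrFun hM
  rw [det_succ_column_zero, Fin.sum_univ_succ, Finset.sum_eq_zero fun i _ => by
    simp [hM' i.succ]]
  simp [hM' 0, Fin.succAbove_zero]

theorem Matrix.rank_submatrix_of_rank_eq_card {K m m' n : Type*} [Field K] [Fintype m]
    [Fintype m'] [Fintype n] (B : Matrix m n K) (hB : B.rank = Fintype.card m) {r : m' → m}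
    (hr : Function.Injective r) : (B.submatrix r id).rank = Fintype.card m' := by
  have hrows : LinearIndependent K B.row := by
    rw [linearIndependent_iff_card_eq_finrank_span, Set.finrank, ← rank_eq_finrank_span_row, hB]
  exact LinearIndependent.rank_matrix (hrows.comp r hr)

theorem Matrix.abs_le_abs_det_of_col_zero_eq_single {k : ℕ}
    (M : Matrix (Fin (k + 1)) (Fin (k + 1)) ℤ) {γ : ℤ} (hM : (fun i => M i 0) = Pi.single 0 γ)
    (hminor : (M.submatrix Fin.succ Fin.succ).det ≠ 0) : |γ| ≤ |M.det| := by
  rw [M.det_eq_mul_det_submatrix_succ_of_col_zero hM, abs_mul]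
  exact le_mul_of_one_le_right (abs_nonneg γ) (Int.one_le_abs hminor)

theorem Matrix.exists_submatrix_det_ne_zero_of_rank_eq {k : ℕ} [NeZero k] {ι : Type*} [Fintype ι]
    (B : Matrix (Fin k) ι ℤ) (hB : B.rank = k) {j : ι} (hj : (fun i => B i j) ≠ 0) :
    ∃ h : Fin k → ι, h 0 = j ∧ (B.submatrix id h).det ≠ 0 := by
  set Bq := B.map (Int.cast : ℤ → ℚ)
  have hspan : span ℚ (range Bq.col) = ⊤ := by
    apply Submodule.eq_top_of_finrank_eq
    rw [← rank_eq_finrank_span_cols, rank_map_intCast, hB, finrank_fin_fun]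
  have hjq : Bq.col j ≠ 0 := fun h0 => hj <| funext fun i =>
    Int.cast_eq_zero.mp (congrFun h0 i)
  obtain ⟨h, h0, hli⟩ := exists_linearIndependent_comp_fin_of_span_eq_top (finrank_fin_fun ℚ)
    hspan hjq
  refine ⟨h, h0, fun hdet => ?_⟩
  have hunit : IsUnit (Bq.submatrix id h).det :=
    (isUnit_iff_isUnit_det _).mp (linearIndependent_cols_iff_isUnit.mp hli)
  rw [show Bq.submatrix id h = (Int.castRingHom ℚ).mapMatrix (B.submatrix id h) from rfl,
    ← RingHom.map_det, hdet, map_zero] at hunit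
  exact not_isUnit_zero hunit

theorem Fin.cons_zero_eq_single_zero {α : Type*} [Zero α] {k : ℕ} (a : α) :
    (Fin.cons a (0 : Fin k → α) : Fin (k + 1) → α) = Pi.single 0 a := by
  ext i
  cases i using Fin.cases <;> simp

theorem Set.ncard_le_of_abs_sub_le {S : Set ℤ} {d : ℕ} (hS : ∀ x ∈ S, ∀ y ∈ S, |x - y| ≤ d) :
    S.ncard ≤ d + 1 := by
  rcases S.eq_empty_or_nonempty with rfl | ⟨a, ha⟩
  · simp
  have hdist {x y} (hx : x ∈ S) (hy : y ∈ S) : x - y ≤ d := (abs_le.mp (hS x hx y hy)).2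
  have hbdd : BddBelow S := ⟨a - d, fun x hx => by linarith [hdist ha hx]⟩
  have hmin : sInf S ∈ S := Int.csInf_mem ⟨a, ha⟩ hbdd
  calc S.ncard ≤ (Icc (sInf S) (sInf S + d)).ncard :=
        ncard_le_ncard (fun x hx => ⟨csInf_le hbdd hx, by linarith [hdist hx hmin]⟩)
          (finite_Icc _ _)
    _ = d + 1 := by
        rw [ncard_eq_toFinset_card', Set.toFinset_Icc, Int.card_Icc]
        omega

section

variable {m n : ℕ} (A : Matrix (Fin (m + 1)) (Fin (n + 1)) ℤ)

theorem rank_submatrix_succ_of_rank_eq (hrank : A.rank = m + 1) :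
    (A.submatrix Fin.succ id).rank = m := by
  have h := (A.map (Int.cast : ℤ → ℚ)).rank_submatrix_of_rank_eq_card
    (by rw [rank_map_intCast, hrank, Fintype.card_fin]) (Fin.succ_injective m)
  rwa [submatrix_map, rank_map_intCast, Fintype.card_fin] at h

theorem exists_det_submatrix_succ_ne_zero (hrank : A.rank = m + 1)
    (hfirst : (fun i => A i 0) = Pi.single 0 1) :
    ∃ h : Fin m → Fin (n + 1), (A.submatrix Fin.succ h).det ≠ 0 := by
  obtain ⟨h, h0, hdet⟩ := A.exists_submatrix_det_ne_zero_of_rank_eq hrank (j := 0)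
    (by simp [hfirst])
  refine ⟨Fin.tail h, ?_⟩
  have hcol : (fun i => A.submatrix id h i 0) = Pi.single 0 1 := by simpa [h0] using hfirst
  rwa [det_eq_mul_det_submatrix_succ_of_col_zero _ hcol, one_mul] at hdet

theorem mem_one_two_neg_two_of_col_eq_cons_zero (hrank : A.rank = m + 1) (hmod : DMod A 2)
    (hdiff : DiffCols A) (hfirst : (fun i => A i 0) = Pi.single 0 1) {β : ℤ} {j : Fin (n + 1)}
    (hj : (fun i => A i j) = Fin.cons β 0) : β ∈ ({1, 2, -2} : Finset ℤ) := by
  rw [Fin.cons_zero_eq_single_zero] at hj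
  have hle : |β| ≤ 2 := by
    obtain ⟨h, hh⟩ := exists_det_submatrix_succ_ne_zero A hrank hfirst
    calc |β| ≤ |(A.submatrix id (Fin.cons j h)).det| :=
          abs_le_abs_det_of_col_zero_eq_single _ hj hh
      _ ≤ 2 := hmod _
  have hne_zero : β ≠ 0 := by
    rintro rfl
    exact hdiff.1 j (by simpa using hj)
  have hne_neg_one : β ≠ -1 := by
    rintro rfl
    by_cases hj0 : j = 0
    · subst hj0
      rw [hfirst] at hj
      simpa using congrFun hj 0
    · exact (hdiff.2 j 0 hj0).2 (by rw [hj, Pi.single_neg, ← hfirst]; rfl)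
  rw [abs_le] at hle
  simp only [Finset.mem_insert, Finset.mem_singleton]
  omega

theorem abs_sub_le_two_of_cols_eq_cons (hrank : A.rank = m + 1) (hmod : DMod A 2)
    {β₁ β₂ : ℤ} {b : Fin m → ℤ} (hb : b ≠ 0) {j₁ j₂ : Fin (n + 1)}
    (hj₁ : (fun i => A i j₁) = Fin.cons β₁ b) (hj₂ : (fun i => A i j₂) = Fin.cons β₂ b) :
    |β₁ - β₂| ≤ 2 := by
  have : NeZero m := ⟨by rintro rfl; exact hb (Subsingleton.elim _ _)⟩
  have hlower : (fun i => A i.succ j₂) = b := funext fun i => by simpa using congrFun hj₂ i.succ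
  obtain ⟨h, h0, hh⟩ := (A.submatrix Fin.succ id).exists_submatrix_det_ne_zero_of_rank_eq
    (rank_submatrix_succ_of_rank_eq A hrank) (j := j₂) (by simpa [hlower] using hb)
  set C := A.submatrix id (Fin.cons j₁ h)
  have hC₁ (i) : C i 0 = A i j₁ := rfl
  have hC₂ (i) : C i (Fin.succ 0) = A i j₂ := by
    simp only [C, submatrix_apply, id, Fin.cons_succ, h0]
  set D := C.updateCol 0 fun i => C i 0 + (-1) • C i (Fin.succ 0)
  have hcol : (fun i => D i 0) = Pi.single 0 (β₁ - β₂) := by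
    rw [← Fin.cons_zero_eq_single_zero]
    ext i
    simp only [D, updateCol_self, hC₁, hC₂, congrFun hj₁, congrFun hj₂]
    cases i using Fin.cases <;> simp [sub_eq_add_neg]
  have hminor : D.submatrix Fin.succ Fin.succ = A.submatrix Fin.succ h := by
    ext i k
    simp [D, C]
  calc |β₁ - β₂| ≤ |D.det| := abs_le_abs_det_of_col_zero_eq_single _ hcol (hminor ▸ hh)
    _ = |C.det| := by rw [det_updateCol_add_smul_self _ (Fin.succ_ne_zero 0).symm]
    _ ≤ 2 := hmod _

end

theorem stmt2 {m n : ℕ} (A : Matrix (Fin (m+1)) (Fin (n+1)) ℤ)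
    (hrank : A.rank = m+1) (hmod : DMod A 2) (hdiff : DiffCols A)
    (hfirst : (fun i => A i 0) = Pi.single 0 1)
    (b : Fin m → ℤ) :
    {β : ℤ | ∃ j, (fun i => A i j) = Fin.cons β b}.ncard ≤ 3 := by
  by_cases hb : b = 0
  · subst hb
    have hsub : {β : ℤ | ∃ j, (fun i => A i j) = Fin.cons β 0} ⊆ ({1, 2, -2} : Finset ℤ) := by
      rintro β ⟨j, hj⟩
      exact mem_one_two_neg_two_of_col_eq_cons_zero A hrank hmod hdiff hfirst hj
    calc _ ≤ ((({1, 2, -2} : Finset ℤ) : Set ℤ)).ncard := ncard_le_ncard hsub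
      _ ≤ 3 := by rw [ncard_coe_finset]; exact Finset.card_le_three
  · refine ncard_le_of_abs_sub_le (d := 2) ?_
    rintro β₁ ⟨j₁, hj₁⟩ β₂ ⟨j₂, hj₂⟩
    exact abs_sub_le_two_of_cols_eq_cons A hrank hmod hb hj₁ hj₂
end

section
/- For every Δ, m ∈ Z_{≥1}, there exists an integer matrix A with m rows, rank m, with pairwise differing nonzero columns, such that every m×m minor of A has absolute value at most Δ, and A has at least (m² + m)/2 + m(Δ − 1) columns. -/
/-!
The matrix with columns `e_j - e_i` (`0 ≤ i < j < m`) and `e_i + a e_0` (`0 ≤ a < Δ`) has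
`m(m-1)/2 + mΔ` columns, contains every unit vector, and its columns have positive inner product
with `(1, 2, …, m)`, so no two of them are equal or opposite.

Each column is a difference of two of the vectors `e_1, …, e_{m-1}` and `c e_0` with
`1 - Δ ≤ c ≤ 1`, i.e. an arc of a directed graph on these nodes. As for network matrices, a
square matrix of arcs can be pivoted on a `±1` entry of its last row, leaving (up to sign) a
smaller matrix of arcs; at size one the determinant is `c - c'` for two nodes `c e_0, c' e_0`,
so every maximal minor is at most `1 - (1 - Δ) = Δ` in absolute value.
-/

open Matrix

section Arcs

def IsNode {k : ℕ} (lo hi : ℤ) (p : Fin (k + 1) → ℤ) : Prop :=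
  (∃ c, lo ≤ c ∧ c ≤ hi ∧ p = Pi.single 0 c) ∨ ∃ i ≠ 0, p = Pi.single i 1

def IsArc {k : ℕ} (lo hi : ℤ) (v : Fin (k + 1) → ℤ) : Prop :=
  ∃ p q, IsNode lo hi p ∧ IsNode lo hi q ∧ v = p - q

variable {k : ℕ} {lo hi : ℤ}

lemma isNode_single_one (hlo : lo ≤ 1) (hhi : 1 ≤ hi) (i : Fin (k + 1)) :
    IsNode lo hi (Pi.single i 1) := by
  by_cases hi0 : i = 0
  · exact .inl ⟨1, hlo, hhi, hi0 ▸ rfl⟩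
  · exact .inr ⟨i, hi0, rfl⟩

lemma IsNode.eq_single_of_apply_ne_zero {p : Fin (k + 1) → ℤ} (hp : IsNode lo hi p)
    {i : Fin (k + 1)} (hi0 : i ≠ 0) (hpi : p i ≠ 0) : p = Pi.single i 1 := by
  rcases hp with ⟨c, -, -, rfl⟩ | ⟨i', -, rfl⟩
  · simp [hi0] at hpi
  · obtain rfl : i = i' := by by_contra h; simp [h] at hpi
    rfl

lemma IsNode.apply_eq_zero_or_one {p : Fin (k + 1) → ℤ} (hp : IsNode lo hi p)
    {i : Fin (k + 1)} (hi0 : i ≠ 0) : p i = 0 ∨ p i = 1 := by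
  by_cases hpi : p i = 0
  · exact .inl hpi
  · exact .inr (by simp [hp.eq_single_of_apply_ne_zero hi0 hpi])

lemma IsNode.comp_castSucc {p : Fin (k + 2) → ℤ} (hp : IsNode lo hi p)
    (hlast : p (Fin.last _) = 0) : IsNode lo hi (p ∘ Fin.castSucc) := by
  rcases hp with ⟨c, hlc, hch, rfl⟩ | ⟨i, hi0, rfl⟩
  · refine .inl ⟨c, hlc, hch, ?_⟩
    ext j
    simp [Pi.single_apply, Fin.castSucc_eq_zero_iff]
  · have hil : i ≠ Fin.last _ := fun h => by simp [h] at hlast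
    obtain ⟨i, rfl⟩ := Fin.exists_castSucc_eq.mpr hil
    refine .inr ⟨i, by simpa using hi0, ?_⟩
    ext j
    simp [Pi.single_apply]

lemma IsArc.comp_castSucc (hlohi : lo ≤ hi) {v : Fin (k + 2) → ℤ} (hv : IsArc lo hi v)
    (hlast : v (Fin.last _) = 0) : IsArc lo hi (v ∘ Fin.castSucc) := by
  obtain ⟨p, q, hp, hq, rfl⟩ := hv
  have hpq : p (Fin.last _) = q (Fin.last _) := sub_eq_zero.mp hlast
  by_cases hp0 : p (Fin.last _) = 0
  · exact ⟨_, _, hp.comp_castSucc hp0, hq.comp_castSucc (hpq ▸ hp0), rfl⟩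
  · have hq0 : q (Fin.last _) ≠ 0 := hpq ▸ hp0
    rw [hp.eq_single_of_apply_ne_zero (Fin.last_pos.ne') hp0,
      hq.eq_single_of_apply_ne_zero (Fin.last_pos.ne') hq0, sub_self]
    exact ⟨_, _, .inl ⟨lo, le_rfl, hlohi, rfl⟩, .inl ⟨lo, le_rfl, hlohi, rfl⟩, by simp⟩

lemma IsArc.exists_eq_of_apply_ne_zero {v : Fin (k + 1) → ℤ} (hv : IsArc lo hi v)
    {i : Fin (k + 1)} (hi0 : i ≠ 0) (hvi : v i ≠ 0) :
    ∃ r, IsNode lo hi r ∧ r i = 0 ∧ (v = Pi.single i 1 - r ∨ v = r - Pi.single i 1) := by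
  obtain ⟨p, q, hp, hq, rfl⟩ := hv
  have hpq : p i ≠ q i := sub_ne_zero.mp hvi
  rcases hp.apply_eq_zero_or_one hi0 with hpi | hpi
  · refine ⟨p, hp, hpi, .inr ?_⟩
    rw [hq.eq_single_of_apply_ne_zero hi0 (hpi ▸ hpq.symm)]
  · refine ⟨q, hq, (hq.apply_eq_zero_or_one hi0).resolve_right (hpi ▸ hpq.symm), .inl ?_⟩
    rw [hp.eq_single_of_apply_ne_zero hi0 (by simp [hpi])]

lemma IsArc.apply_eq_one_or_neg_one {v : Fin (k + 1) → ℤ} (hv : IsArc lo hi v)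
    {i : Fin (k + 1)} (hi0 : i ≠ 0) (hvi : v i ≠ 0) : v i = 1 ∨ v i = -1 := by
  obtain ⟨r, -, hri, rfl | rfl⟩ := hv.exists_eq_of_apply_ne_zero hi0 hvi <;> simp [hri]

lemma IsArc.sub_smul {v w : Fin (k + 1) → ℤ} (hv : IsArc lo hi v) (hw : IsArc lo hi w)
    {i : Fin (k + 1)} (hi0 : i ≠ 0) (hwi : w i ≠ 0) : IsArc lo hi (v - (v i * w i) • w) := by
  by_cases hvi : v i = 0
  · simpa [hvi] using hv
  obtain ⟨r, hr, hri, rfl | rfl⟩ := hv.exists_eq_of_apply_ne_zero hi0 hvi <;>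
  obtain ⟨s, hs, hsi, rfl | rfl⟩ := hw.exists_eq_of_apply_ne_zero hi0 hwi
  · exact ⟨s, r, hs, hr, by simp [hri, hsi]⟩
  · exact ⟨s, r, hs, hr, by simp [hri, hsi]⟩
  · exact ⟨r, s, hr, hs, by simp [hri, hsi]⟩
  · exact ⟨r, s, hr, hs, by simp [hri, hsi]⟩

lemma det_eq_zero_or_exists_isArc_abs_det_eq (hlohi : lo ≤ hi)
    (M : Matrix (Fin (k + 2)) (Fin (k + 2)) ℤ) (hM : ∀ j, IsArc lo hi (M.col j)) :
    M.det = 0 ∨ ∃ N : Matrix (Fin (k + 1)) (Fin (k + 1)) ℤ,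
      (∀ j, IsArc lo hi (N.col j)) ∧ |M.det| = |N.det| := by
  set r := Fin.last (k + 1)
  have hr : r ≠ 0 := Fin.last_pos.ne'
  by_cases hrow : ∀ j, M r j = 0
  · exact .inl (det_eq_zero_of_row_eq_zero r hrow)
  obtain ⟨j₀, hj₀⟩ := not_forall.mp hrow
  have hpivot : M r j₀ = 1 ∨ M r j₀ = -1 := (hM j₀).apply_eq_one_or_neg_one hr hj₀
  let c : Fin (k + 2) → ℤ := fun j => if j = j₀ then 0 else -(M r j * M r j₀)
  let M' : Matrix (Fin (k + 2)) (Fin (k + 2)) ℤ := of fun i j => M i j + c j * M i j₀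
  have hdet : M'.det = M.det := by
    rw [← det_transpose M', ← det_transpose M]
    exact det_eq_of_forall_row_eq_smul_add_const c j₀ (by simp [c]) fun _ _ => rfl
  have hrow' : ∀ j ≠ j₀, M' r j = 0 := by
    intro j hj
    rcases hpivot with h | h <;> simp [M', c, hj, h]
  have hcols : ∀ j ≠ j₀, IsArc lo hi (M'.col j) := by
    intro j hj
    convert (hM j).sub_smul (hM j₀) hr hj₀ using 1
    ext i
    simp only [M', c, col_apply, of_apply, hj, ↓reduceIte, Pi.sub_apply,
      Pi.smul_apply, smul_eq_mul]
    ring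
  refine .inr ⟨M'.submatrix Fin.castSucc j₀.succAbove, fun j => ?_, ?_⟩
  · have hj := Fin.succAbove_ne j₀ j
    exact (hcols _ hj).comp_castSucc hlohi (hrow' _ hj)
  · rw [← hdet, det_succ_row M' r, Finset.sum_eq_single j₀ (fun j _ hj => by simp [hrow' j hj])
      (by simp), Fin.succAbove_last]
    rcases hpivot with h | h <;> simp [M', c, h, abs_mul]

theorem abs_det_le_of_isArc (hlohi : lo ≤ hi) :
    ∀ {k : ℕ} (M : Matrix (Fin (k + 1)) (Fin (k + 1)) ℤ), (∀ j, IsArc lo hi (M.col j)) →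
      |M.det| ≤ hi - lo
  | 0, M, hM => by
    have hnode : ∀ p : Fin 1 → ℤ, IsNode lo hi p → lo ≤ p 0 ∧ p 0 ≤ hi := by
      rintro p (⟨c, hlc, hch, rfl⟩ | ⟨i, hi0, -⟩)
      · simpa using ⟨hlc, hch⟩
      · exact absurd (Fin.fin_one_eq_zero i) hi0
    obtain ⟨p, q, hp, hq, hpq⟩ := hM 0
    have hM00 : M 0 0 = p 0 - q 0 := congrFun hpq 0
    rw [det_fin_one, hM00, abs_le]
    constructor <;> linarith [hnode p hp, hnode q hq]
  | k + 1, M, hM => by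
    rcases det_eq_zero_or_exists_isArc_abs_det_eq hlohi M hM with h | ⟨N, hN, h⟩
    · rw [h, abs_zero]; linarith
    · exact h ▸ abs_det_le_of_isArc hlohi N hN

end Arcs

lemma diffCols_of_injective_of_dotProduct_pos {m n : ℕ} {A : Matrix (Fin m) (Fin n) ℤ}
    (w : Fin m → ℤ) (hinj : Function.Injective A.col) (hpos : ∀ j, 0 < w ⬝ᵥ A.col j) :
    DiffCols A := by
  refine ⟨fun j h => by simpa [show A.col j = 0 from h] using hpos j,
    fun j j' hjj' => ⟨fun h => hjj' (hinj h), fun h => ?_⟩⟩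
  have hneg : A.col j = -A.col j' := h
  have := hpos j
  rw [hneg, dotProduct_neg] at this
  linarith [hpos j']

lemma rank_eq_card_of_forall_exists_col_eq_single {R m n : Type*} [CommRing R]
    [StrongRankCondition R] [Fintype m] [DecidableEq m] [Fintype n] (A : Matrix m n R)
    (h : ∀ i, ∃ j, A.col j = Pi.single i 1) : A.rank = Fintype.card m := by
  have hspan : Submodule.span R (Set.range A.col) = ⊤ := by
    rw [eq_top_iff, ← (Pi.basisFun R m).span_eq, Submodule.span_le]
    rintro _ ⟨i, rfl⟩
    obtain ⟨j, hj⟩ := h i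
    exact Submodule.subset_span ⟨j, by simpa using hj⟩
  rw [rank_eq_finrank_span_cols, hspan, finrank_top, Module.finrank_fintype_fun_eq_card]

abbrev ExtremalIndex (Δ m : ℕ) : Type := (Σ j : Fin m, Fin j) ⊕ (Fin Δ × Fin m)

lemma two_mul_card_extremalIndex (Δ m : ℕ) :
    2 * Fintype.card (ExtremalIndex Δ m) = m * (m - 1) + 2 * Δ * m := by
  simp only [Fintype.card_sum, Fintype.card_sigma, Fintype.card_prod, Fintype.card_fin,
    Fin.sum_univ_eq_sum_range (fun i => i) m, ← Finset.sum_range_id_mul_two]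
  ring

-- `e_i + a e_0` is the arc from the node `-a e_0` to `e_i`; the node `e_0` is `1 • e_0`.
def extremalColumn (Δ k : ℕ) : ExtremalIndex Δ (k + 1) → Fin (k + 1) → ℤ
  | .inl ⟨j, i⟩ => Pi.single j 1 - Pi.single (Fin.castLE j.isLt.le i) 1
  | .inr (a, i) => Pi.single i 1 - Pi.single 0 (-(a : ℤ))

lemma isArc_extremalColumn {Δ k : ℕ} (x : ExtremalIndex Δ (k + 1)) :
    IsArc (1 - Δ) 1 (extremalColumn Δ k x) := by
  have hnode := isNode_single_one (k := k) (lo := 1 - Δ) (hi := 1) (by omega) le_rfl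
  rcases x with ⟨j, i⟩ | ⟨a, i⟩
  · exact ⟨_, _, hnode j, hnode _, rfl⟩
  · have ha : (a : ℤ) < Δ := by exact_mod_cast a.isLt
    exact ⟨_, _, hnode i, .inl ⟨-(a : ℤ), by omega, by omega, rfl⟩, rfl⟩

lemma dotProduct_extremalColumn_pos {Δ k : ℕ} (x : ExtremalIndex Δ (k + 1)) :
    0 < (fun r : Fin (k + 1) => (r : ℤ) + 1) ⬝ᵥ extremalColumn Δ k x := by
  rcases x with ⟨j, i⟩ | ⟨a, i⟩
  · simp [extremalColumn, dotProduct_sub]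
  · simp only [extremalColumn, dotProduct_sub, dotProduct_single, Fin.val_zero,
      Nat.cast_zero]
    omega

lemma extremalColumn_injective (Δ k : ℕ) : Function.Injective (extremalColumn Δ k) := by
  have hsum : ∀ x, (fun _ => (1 : ℤ)) ⬝ᵥ extremalColumn Δ k x =
      Sum.elim (fun _ => 0) (fun y => (y.1 : ℤ) + 1) x := by
    rintro (⟨j, i⟩ | ⟨a, i⟩) <;> simp [extremalColumn, dotProduct_sub, add_comm]
  intro x y h
  have hxy := (hsum x).symm.trans (h ▸ hsum y)
  rcases x with ⟨j, i⟩ | ⟨a, i⟩ <;> rcases y with ⟨j', i'⟩ | ⟨a', i'⟩ <;>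
    simp only [Sum.elim_inl, Sum.elim_inr] at hxy
  · have h1 := congrFun h j
    have h2 := congrFun h (Fin.castLE j.isLt.le i)
    simp only [extremalColumn, Pi.sub_apply, Pi.single_apply, Fin.ext_iff, Fin.val_castLE]
      at h1 h2
    have hi := i.isLt
    obtain rfl : j = j' := Fin.ext (by split_ifs at h1 <;> omega)
    obtain rfl : i = i' := Fin.ext (by split_ifs at h2 <;> omega)
    rfl
  · omega
  · omega
  · obtain rfl : a = a' := Fin.ext (by omega)
    obtain rfl : i = i' := by simpa [extremalColumn, Pi.single_apply] using congrFun h i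
    rfl

theorem stmt3 (Δ m : ℕ) (hΔ : 1 ≤ Δ) (hm : 1 ≤ m) :
    ∃ (n : ℕ) (A : Matrix (Fin m) (Fin n) ℤ),
      A.rank = m ∧ DiffCols A ∧ DMod A (Δ : ℤ) ∧
      m ^ 2 + m + 2 * m * (Δ - 1) ≤ 2 * n := by
  obtain ⟨k, rfl⟩ : ∃ k, m = k + 1 := ⟨m - 1, by omega⟩
  let e := Fintype.equivFin (ExtremalIndex Δ (k + 1))
  let A : Matrix (Fin (k + 1)) (Fin _) ℤ := of fun i j => extremalColumn Δ k (e.symm j) i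
  refine ⟨_, A, ?_, ?_, fun g => ?_, ?_⟩
  · refine (rank_eq_card_of_forall_exists_col_eq_single A fun i =>
      ⟨e (.inr (⟨0, hΔ⟩, i)), ?_⟩).trans (Fintype.card_fin _)
    ext r
    simp [A, extremalColumn]
  · exact diffCols_of_injective_of_dotProduct_pos _
      ((extremalColumn_injective Δ k).comp e.symm.injective)
      fun j => dotProduct_extremalColumn_pos (e.symm j)
  · simpa using abs_det_le_of_isArc (by omega) (A.submatrix id g)
      fun j => isArc_extremalColumn (e.symm (g j))
  · have hcard := two_mul_card_extremalIndex Δ (k + 1)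
    obtain ⟨d, rfl⟩ : ∃ d, Δ = d + 1 := ⟨Δ - 1, by omega⟩
    simp only [Nat.add_sub_cancel] at hcard ⊢
    nlinarith
end

section
/- The explicit matrix A ∈ Z^{m×n} whose columns are: e^i for i = 1,…,m; k·e^1 for k = 2,…,Δ; k·e^1 − e^i for k = 1,…,Δ and i = 2,…,m; and e^i − e^j for 2 ≤ i < j ≤ m, is Δ-modular, i.e., every m×m minor of A has absolute value at most Δ. -/
namespace Stmt4Aux


def vA {n : ℕ} (c : ℤ) : Fin (n+1) → ℤ := fun r => if r = 0 then c else 0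
def vB {n : ℕ} (s c : ℤ) (i : Fin (n+1)) : Fin (n+1) → ℤ :=
  fun r => if r = 0 then s * c else if r = i then -s else 0
def vC {n : ℕ} (s : ℤ) (i : Fin (n+1)) : Fin (n+1) → ℤ := fun r => if r = i then s else 0
def vD {n : ℕ} (i j : Fin (n+1)) : Fin (n+1) → ℤ :=
  fun r => if r = i then 1 else if r = j then -1 else 0

def Col (Δ : ℤ) (n : ℕ) (v : Fin (n+1) → ℤ) : Prop :=
  (∃ c, |c| ≤ Δ ∧ v = vA c) ∨
  (∃ s c i, (s = 1 ∨ s = -1) ∧ 1 ≤ c ∧ c ≤ Δ ∧ i ≠ 0 ∧ v = vB s c i) ∨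
  (∃ s i, (s = 1 ∨ s = -1) ∧ i ≠ 0 ∧ v = vC s i) ∨
  (∃ i j, i ≠ 0 ∧ j ≠ 0 ∧ i ≠ j ∧ v = vD i j)

/-- clearing row `i` using a type-B pivot column. -/
lemma clearB {Δ : ℤ} (hΔ : 1 ≤ Δ) {n : ℕ} {i : Fin (n+1)} (hi : i ≠ 0) {s c : ℤ}
    (hs : s = 1 ∨ s = -1) (hc1 : 1 ≤ c) (hc2 : c ≤ Δ)
    {v : Fin (n+1) → ℤ} (hv : Col Δ n v) :
    Col Δ n (fun r => v r + (v i * s) * vB s c i r) := by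
  rcases hv with ⟨c', hc', rfl⟩ | ⟨s', c', i', hs', hc1', hc2', hi', rfl⟩ |
    ⟨s', i', hs', hi', rfl⟩ | ⟨i', j', hi', hj', hij', rfl⟩
  · -- type A : unchanged
    left; refine ⟨c', hc', ?_⟩
    funext r
    simp only [vA, vB]
    have : i ≠ 0 := hi
    split_ifs <;> simp_all <;> ring
  · -- type B
    by_cases h : i' = i
    · subst h
      left
      refine ⟨s' * (c' - c), ?_, ?_⟩
      · rcases hs' with rfl | rfl <;> rw [abs_le] <;> constructor <;> omega
      · funext r
        simp only [vA, vB]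
        rcases hs with rfl | rfl <;> rcases hs' with rfl | rfl <;>
          split_ifs <;> simp_all <;> ring
    · right; left
      refine ⟨s', c', i', hs', hc1', hc2', hi', ?_⟩
      funext r
      simp only [vB]
      split_ifs <;> simp_all <;> ring
  · -- type C
    by_cases h : i' = i
    · subst h
      left
      refine ⟨s' * c, ?_, ?_⟩
      · rcases hs' with rfl | rfl <;> rw [abs_le] <;> constructor <;> omega
      · funext r
        simp only [vA, vB, vC]
        rcases hs with rfl | rfl <;> rcases hs' with rfl | rfl <;>
          split_ifs <;> simp_all <;> ring
    · right; right; left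
      refine ⟨s', i', hs', hi', ?_⟩
      funext r
      simp only [vB, vC]
      split_ifs <;> simp_all <;> ring
  · -- type D
    by_cases h : i' = i
    · subst h
      right; left
      refine ⟨1, c, j', Or.inl rfl, hc1, hc2, hj', ?_⟩
      funext r
      simp only [vB, vD]
      rcases hs with rfl | rfl <;> split_ifs <;> simp_all <;> ring
    · by_cases h2 : j' = i
      · subst h2
        right; left
        refine ⟨-1, c, i', Or.inr rfl, hc1, hc2, hi', ?_⟩
        funext r
        simp only [vB, vD]
        rcases hs with rfl | rfl <;> split_ifs <;> simp_all <;> ring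
      · right; right; right
        refine ⟨i', j', hi', hj', hij', ?_⟩
        funext r
        simp only [vB, vD]
        split_ifs <;> simp_all <;> ring

/-- clearing row `i` using a type-C pivot column. -/
lemma clearC {Δ : ℤ} (hΔ : 1 ≤ Δ) {n : ℕ} {i : Fin (n+1)} (hi : i ≠ 0) {s : ℤ}
    (hs : s = 1 ∨ s = -1)
    {v : Fin (n+1) → ℤ} (hv : Col Δ n v) :
    Col Δ n (fun r => v r + (-(v i) * s) * vC s i r) := by
  rcases hv with ⟨c', hc', rfl⟩ | ⟨s', c', i', hs', hc1', hc2', hi', rfl⟩ |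
    ⟨s', i', hs', hi', rfl⟩ | ⟨i', j', hi', hj', hij', rfl⟩
  · left; refine ⟨c', hc', ?_⟩
    funext r
    simp only [vA, vC]
    split_ifs <;> simp_all
  · by_cases h : i' = i
    · subst h
      left
      refine ⟨s' * c', ?_, ?_⟩
      · rcases hs' with rfl | rfl <;> rw [abs_le] <;> constructor <;> omega
      · funext r
        simp only [vA, vB, vC]
        rcases hs with rfl | rfl <;> rcases hs' with rfl | rfl <;>
          split_ifs <;> simp_all
    · right; left
      refine ⟨s', c', i', hs', hc1', hc2', hi', ?_⟩
      funext r
      simp only [vB, vC]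
      split_ifs <;> simp_all
  · by_cases h : i' = i
    · subst h
      left
      refine ⟨0, by rw [abs_le]; omega, ?_⟩
      funext r
      simp only [vA, vC]
      rcases hs with rfl | rfl <;> rcases hs' with rfl | rfl <;>
        split_ifs <;> simp_all
    · right; right; left
      refine ⟨s', i', hs', hi', ?_⟩
      funext r
      simp only [vC]
      split_ifs <;> simp_all
  · by_cases h : i' = i
    · subst h
      right; right; left
      refine ⟨-1, j', Or.inr rfl, hj', ?_⟩
      funext r
      simp only [vC, vD]
      rcases hs with rfl | rfl <;> split_ifs <;> simp_all
    · by_cases h2 : j' = i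
      · subst h2
        right; right; left
        refine ⟨1, i', Or.inl rfl, hi', ?_⟩
        funext r
        simp only [vC, vD]
        rcases hs with rfl | rfl <;> split_ifs <;> simp_all
      · right; right; right
        refine ⟨i', j', hi', hj', hij', ?_⟩
        funext r
        simp only [vC, vD]
        split_ifs <;> simp_all

/-- restricting a column with `v i = 0` along `i.succAbove`. -/
lemma col_restrict {Δ : ℤ} {n : ℕ} {i : Fin (n+2)} (hi : i ≠ 0)
    {v : Fin (n+2) → ℤ} (hv : Col Δ (n+1) v) (hvi : v i = 0) :
    Col Δ n (fun r => v (i.succAbove r)) := by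
  have hinj : Function.Injective i.succAbove := Fin.succAbove_right_injective
  have h0 : i.succAbove 0 = 0 := Fin.succAbove_ne_zero_zero hi
  have hzero : ∀ r : Fin (n+1), (i.succAbove r = 0) ↔ r = 0 :=
    fun r => Fin.succAbove_eq_zero_iff hi
  rcases hv with ⟨c', hc', rfl⟩ | ⟨s', c', i', hs', hc1', hc2', hi', rfl⟩ |
    ⟨s', i', hs', hi', rfl⟩ | ⟨i', j', hi', hj', hij', rfl⟩
  · left
    refine ⟨c', hc', ?_⟩
    funext r
    simp only [vA, hzero r]
  · have hne : i' ≠ i := by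
      intro h
      simp only [vB, h, if_neg hi, eq_self_iff_true, if_true] at hvi
      rcases hs' with rfl | rfl <;> omega
    obtain ⟨r', hr'⟩ := Fin.exists_succAbove_eq hne
    right; left
    refine ⟨s', c', r', hs', hc1', hc2', ?_, ?_⟩
    · intro h; subst h; rw [h0] at hr'; exact hi' hr'.symm
    · funext r
      simp only [vB, hzero r, ← hr', hinj.eq_iff]
  · have hne : i' ≠ i := by
      intro h
      simp only [vC, h, eq_self_iff_true, if_true] at hvi
      rcases hs' with rfl | rfl <;> omega
    obtain ⟨r', hr'⟩ := Fin.exists_succAbove_eq hne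
    right; right; left
    refine ⟨s', r', hs', ?_, ?_⟩
    · intro h; subst h; rw [h0] at hr'; exact hi' hr'.symm
    · funext r
      simp only [vC, ← hr', hinj.eq_iff]
  · have hne1 : i' ≠ i := by
      intro h
      simp only [vD, h, eq_self_iff_true, if_true] at hvi
      omega
    have hne2 : j' ≠ i := by
      intro h
      simp only [vD, h, if_neg (Ne.symm hne1), eq_self_iff_true, if_true] at hvi
      omega
    obtain ⟨r1, hr1⟩ := Fin.exists_succAbove_eq hne1
    obtain ⟨r2, hr2⟩ := Fin.exists_succAbove_eq hne2
    right; right; right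
    refine ⟨r1, r2, ?_, ?_, ?_, ?_⟩
    · intro h; subst h; rw [h0] at hr1; exact hi' hr1.symm
    · intro h; subst h; rw [h0] at hr2; exact hj' hr2.symm
    · intro h; subst h; rw [hr1] at hr2; exact hij' hr2
    · funext r
      simp only [vD, ← hr1, ← hr2, hinj.eq_iff]



/-- adding multiples of a fixed column to the other columns preserves det. -/
lemma det_colop {N : Type*} [Fintype N] [DecidableEq N] (B : Matrix N N ℤ) (jc : N)
    (t : N → ℤ) (ht : t jc = 0) :
    (Matrix.of fun p q => B p q + t q * B p jc).det = B.det := by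
  rw [← Matrix.det_transpose, ← Matrix.det_transpose B]
  exact Matrix.det_eq_of_forall_row_eq_smul_add_const t jc ht (fun q p => rfl)

/-- expansion along a row with a single ±1 entry. -/
lemma abs_det_single_row {n : ℕ} (B : Matrix (Fin (n+2)) (Fin (n+2)) ℤ)
    (i jc : Fin (n+2)) (h0 : ∀ q, q ≠ jc → B i q = 0) (h1 : B i jc = 1 ∨ B i jc = -1) :
    |B.det| = |(B.submatrix i.succAbove jc.succAbove).det| := by
  rw [Matrix.det_succ_row B i, Finset.sum_eq_single jc]
  · rw [abs_mul, abs_mul, abs_pow, abs_neg, abs_one, one_pow, one_mul]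
    rcases h1 with h1 | h1 <;> rw [h1] <;> simp
  · intro q _ hq
    rw [h0 q hq]
    ring
  · intro h; exact absurd (Finset.mem_univ jc) h

lemma key (Δ : ℤ) (hΔ : 1 ≤ Δ) : ∀ n (B : Matrix (Fin (n+1)) (Fin (n+1)) ℤ),
    (∀ q, Col Δ n (fun p => B p q)) → |B.det| ≤ Δ := by
  intro n
  induction n with
  | zero =>
    intro B hB
    rw [Matrix.det_fin_one]
    rcases hB 0 with ⟨c, hc, h⟩ | ⟨s, c, i, _, _, _, hi, _⟩ | ⟨s, i, _, hi, _⟩ |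
      ⟨i, j, hi, _, _, _⟩
    · have hB00 : B 0 0 = c := by simpa [vA] using congrFun h 0
      rw [hB00]; exact hc
    · exact absurd (Fin.fin_one_eq_zero i) hi
    · exact absurd (Fin.fin_one_eq_zero i) hi
    · exact absurd (Fin.fin_one_eq_zero i) hi
  | succ n IH =>
    intro B hB
    by_cases hpiv : ∃ jc : Fin (n+2),
        (∃ s c i, (s = 1 ∨ s = -1) ∧ 1 ≤ c ∧ c ≤ Δ ∧ i ≠ 0 ∧
          (fun p => B p jc) = vB s c i) ∨
        (∃ s i, (s = 1 ∨ s = -1) ∧ i ≠ 0 ∧ (fun p => B p jc) = vC s i)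
    · obtain ⟨jc, hjc⟩ := hpiv
      have hmain : ∃ (i : Fin (n+2)) (ε : ℤ), i ≠ 0 ∧ (ε = 1 ∨ ε = -1) ∧ B i jc = ε ∧
          ∀ v, Col Δ (n+1) v → Col Δ (n+1) (fun r => v r + (-(v i) * ε) * B r jc) := by
        rcases hjc with ⟨s, c, i, hs, hc1, hc2, hi, hcol⟩ | ⟨s, i, hs, hi, hcol⟩
        · refine ⟨i, -s, hi, by rcases hs with rfl | rfl <;> simp, ?_, ?_⟩
          · have := congrFun hcol i
            simp only [vB, if_neg hi, eq_self_iff_true, if_true] at this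
            exact this
          · intro v hv
            have h2 := clearB hΔ hi hs hc1 hc2 hv
            have heq : (fun r => v r + (-(v i) * -s) * B r jc)
                = (fun r => v r + (v i * s) * vB s c i r) := by
              funext r; rw [← congrFun hcol r]; ring
            rw [heq]; exact h2
        · refine ⟨i, s, hi, hs, ?_, ?_⟩
          · have := congrFun hcol i
            simp only [vC, eq_self_iff_true, if_true] at this
            exact this
          · intro v hv
            have h2 := clearC hΔ hi hs hv
            have heq : (fun r => v r + (-(v i) * s) * B r jc)
                = (fun r => v r + (-(v i) * s) * vC s i r) := by
              funext r; rw [← congrFun hcol r]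
            rw [heq]; exact h2
      obtain ⟨i, ε, hi, hε, hBi, hclear⟩ := hmain
      set t : Fin (n+2) → ℤ := fun q => if q = jc then 0 else -(B i q) * ε with ht
      set B' := Matrix.of fun p q => B p q + t q * B p jc with hB'
      have happly : ∀ p q, B' p q = B p q + t q * B p jc := fun p q => rfl
      have hdet : B'.det = B.det := det_colop B jc t (by simp [ht])
      have hB'col : ∀ q, Col Δ (n+1) (fun p => B' p q) := by
        intro q
        by_cases hq : q = jc
        · have heq : (fun p => B' p q) = fun p => B p q := by
            funext p; rw [happly, ht]; simp [hq]
          rw [heq]; exact hB q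
        · have heq : (fun p => B' p q) = fun p => B p q + (-(B i q) * ε) * B p jc := by
            funext p; rw [happly, ht]; simp [hq]
          rw [heq]; exact hclear _ (hB q)
      have hrow : ∀ q, q ≠ jc → B' i q = 0 := by
        intro q hq
        rw [happly, ht]
        simp only [if_neg hq]
        rw [hBi]
        rcases hε with rfl | rfl <;> ring
      have hpivval : B' i jc = 1 ∨ B' i jc = -1 := by
        have heq : B' i jc = B i jc := by rw [happly, ht]; simp
        rw [heq, hBi]; exact hε
      have habs := abs_det_single_row B' i jc hrow hpivval
      rw [← hdet, habs]
      apply IH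
      intro q
      exact col_restrict hi (hB'col (jc.succAbove q)) (hrow _ (Fin.succAbove_ne jc q))
    · -- no pivot: all columns of type A or D, determinant is zero
      have hAD : ∀ q, (∃ c, |c| ≤ Δ ∧ (fun p => B p q) = vA c) ∨
          (∃ i j, i ≠ 0 ∧ j ≠ 0 ∧ i ≠ j ∧ (fun p => B p q) = vD i j) := by
        intro q
        rcases hB q with h | h | h | h
        · exact Or.inl h
        · exact absurd ⟨q, Or.inl h⟩ hpiv
        · exact absurd ⟨q, Or.inr h⟩ hpiv
        · exact Or.inr h
      have hdet0 : B.det = 0 := by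
        rw [← Matrix.exists_vecMul_eq_zero_iff]
        refine ⟨fun p => if p = 0 then 0 else 1, ?_, ?_⟩
        · intro h
          have h1 := congrFun h 1
          have h10 : (1 : Fin (n+2)) ≠ 0 := by
            simp [Fin.ext_iff]
          simp [if_neg h10] at h1
        · funext q
          show ∑ p, (if p = 0 then (0:ℤ) else 1) * B p q = 0
          rcases hAD q with ⟨c, _, hcol⟩ | ⟨i, j, hi, hj, hij, hcol⟩
          · refine Finset.sum_eq_zero fun p _ => ?_
            rw [show B p q = vA c p from congrFun hcol p, vA]
            split_ifs <;> ring
          · have heq : ∀ p : Fin (n+2), (if p = 0 then (0:ℤ) else 1) * B p q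
                = (if p = i then (1:ℤ) else 0) + (if p = j then (-1:ℤ) else 0) := by
              intro p
              rw [show B p q = vD i j p from congrFun hcol p, vD]
              by_cases h1 : p = i <;> by_cases h2 : p = j
              · exact absurd (h1 ▸ h2) hij
              · subst h1; simp [if_neg hi, hij]
              · subst h2; simp [if_neg hj, Ne.symm hij]
              · by_cases h0 : p = 0 <;> simp [h0, h1, h2, Ne.symm hi, Ne.symm hj]
            calc ∑ p, (if p = 0 then (0:ℤ) else 1) * B p q
                = ∑ p : Fin (n+2), ((if p = i then (1:ℤ) else 0) + (if p = j then (-1:ℤ) else 0)) :=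
                  Finset.sum_congr rfl fun p _ => heq p
              _ = 0 := by
                  rw [Finset.sum_add_distrib]
                  simp [Finset.sum_ite_eq']
      rw [hdet0, abs_zero]
      omega

end Stmt4Aux

theorem stmt4 (m : ℕ) (Δ : ℤ) (hΔ : 1 ≤ Δ)
    (S : Set (Fin (m+1) → ℤ))
    (hS : S = {v | (∃ i : Fin (m+1), v = Pi.single i 1) ∨
      (∃ k : ℤ, 2 ≤ k ∧ k ≤ Δ ∧
        v = fun r => k * (Pi.single 0 1 : Fin (m+1) → ℤ) r) ∨
      (∃ (k : ℤ) (i : Fin (m+1)), 1 ≤ k ∧ k ≤ Δ ∧ i ≠ 0 ∧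
        v = fun r => k * (Pi.single 0 1 : Fin (m+1) → ℤ) r -
          (Pi.single i 1 : Fin (m+1) → ℤ) r) ∨
      (∃ i j : Fin (m+1), i ≠ 0 ∧ i < j ∧
        v = fun r => (Pi.single i 1 : Fin (m+1) → ℤ) r -
          (Pi.single j 1 : Fin (m+1) → ℤ) r)}) :
    ∀ B : Matrix (Fin (m+1)) (Fin (m+1)) ℤ, (∀ j, (fun i => B i j) ∈ S) →
      |B.det| ≤ Δ := by
  subst hS
  intro B hBcol
  apply Stmt4Aux.key Δ hΔ m B
  intro q
  rcases hBcol q with ⟨i, h⟩ | ⟨k, hk2, hkΔ, h⟩ | ⟨k, i, hk1, hkΔ, hi, h⟩ | ⟨i, j, hi, hij, h⟩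
  · by_cases hi : i = 0
    · left
      refine ⟨1, by rw [abs_one]; exact hΔ, ?_⟩
      rw [h, hi]
      funext r
      simp only [Stmt4Aux.vA, Pi.single_apply]
    · right; right; left
      refine ⟨1, i, Or.inl rfl, hi, ?_⟩
      rw [h]
      funext r
      simp only [Stmt4Aux.vC, Pi.single_apply]
  · left
    refine ⟨k, by rw [abs_le]; omega, ?_⟩
    rw [h]
    funext r
    simp only [Stmt4Aux.vA, Pi.single_apply]
    split_ifs <;> ring
  · right; left
    refine ⟨1, k, i, Or.inl rfl, hk1, hkΔ, hi, ?_⟩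
    rw [h]
    funext r
    simp only [Stmt4Aux.vB, Pi.single_apply]
    split_ifs <;> simp_all <;> ring
  · right; right; right
    have hj : j ≠ 0 := by
      intro hj0
      rw [hj0] at hij
      exact absurd hij (Fin.not_lt_zero i)
    refine ⟨i, j, hi, hj, ne_of_lt hij, ?_⟩
    rw [h]
    funext r
    simp only [Stmt4Aux.vD, Pi.single_apply]
    split_ifs <;> simp_all <;> ring
end

section
/- For every Δ, m ∈ Z_{≥1}, the maximum number of differing columns of a rank-m Δ-modular integer matrix is at most 3^m · Δ. -/
/-!
Choose an `m × m` submatrix `B` of `A` whose determinant `d` has maximal absolute value; full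
rank makes `d ≠ 0`. By Cramer's rule and maximality, each column `a` has `u := d • B⁻¹ a` with
`|uᵢ| ≤ |d|`, so the digits `uᵢ / |d|` lie in `{-1, 0, 1}`. Two columns with the same digits and
the same class modulo the lattice `B ℤᵐ` (of index `|d|`) have `u`-vectors that agree modulo `d`
and differ by less than `|d|` coordinatewise, hence coincide. So there are at most `3ᵐ |d|`
distinct columns.
-/

open Submodule Module

theorem Int.eq_of_ediv_eq_of_dvd_sub {a b d : ℤ} (hdiv : a / d = b / d) (hdvd : d ∣ a - b) :
    a = b := by
  have hmod : a % d = b % d :=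
    Int.emod_eq_emod_iff_emod_sub_eq_zero.mpr (Int.emod_eq_zero_of_dvd hdvd)
  rw [← Int.mul_ediv_add_emod a d, ← Int.mul_ediv_add_emod b d, hdiv, hmod]

theorem Int.ediv_mem_Icc_of_abs_le {a d : ℤ} (hd : 0 < d) (h : |a| ≤ d) :
    a / d ∈ Finset.Icc (-1) 1 := by
  obtain ⟨h₁, h₂⟩ := abs_le.mp h
  refine Finset.mem_Icc.mpr ⟨Int.le_ediv_of_mul_le hd (by linarith), ?_⟩
  calc a / d ≤ d / d := Int.ediv_le_ediv hd h₂
    _ = 1 := Int.ediv_self hd.ne'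

namespace Matrix

variable {m ι : Type*} [Fintype m] [DecidableEq m]

theorem exists_submatrix_det_ne_zero_of_span_col_eq_top {K : Type*} [Field K]
    (A : Matrix m ι K) (h : span K (Set.range A.col) = ⊤) :
    ∃ g : m → ι, (A.submatrix id g).det ≠ 0 := by
  obtain ⟨κ, a, -, hspan, hli⟩ := exists_linearIndependent' K A.col
  let b : Basis κ K (m → K) := Basis.mk hli (by rw [hspan, h])
  have := Module.Finite.finite_basis b
  have : Fintype κ := Fintype.ofFinite κ
  let e : m ≃ κ := Fintype.equivOfCardEq (by simpa using Module.finrank_eq_card_basis b)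
  refine ⟨a ∘ e, fun h0 => ?_⟩
  have hcols : LinearIndependent K (A.submatrix id (a ∘ e)).col := hli.comp e e.injective
  rw [linearIndependent_cols_iff_isUnit, isUnit_iff_isUnit_det, h0] at hcols
  exact not_isUnit_zero hcols

theorem span_col_map_intCast_eq_top [Fintype ι] (A : Matrix m ι ℤ)
    (h : A.rank = Fintype.card m) :
    span ℚ (Set.range (A.map (Int.cast : ℤ → ℚ)).col) = ⊤ := by
  set N := span ℤ (Set.range A.col)
  have htorsion : ∀ x : m → ℤ, ∃ r : ℤ, r ≠ 0 ∧ r • x ∈ N := by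
    have hq : finrank ℤ ((m → ℤ) ⧸ N) = 0 := by
      have := N.finrank_quotient_add_finrank
      rw [finrank_pi, ← h, rank_eq_finrank_span_cols] at this
      exact Nat.add_eq_right.mp this
    intro x
    obtain ⟨r, hr, hrx⟩ := Module.finrank_eq_zero_iff.mp hq (N.mkQ x)
    exact ⟨r, hr, (Submodule.Quotient.mk_eq_zero N).mp (by rwa [← map_smul] at hrx)⟩
  let castL : (m → ℤ) →ₗ[ℤ] (m → ℚ) := (Algebra.linearMap ℤ ℚ).compLeft m
  have hcast : N.map castL ≤
      (span ℚ (Set.range (A.map (Int.cast : ℤ → ℚ)).col)).restrictScalars ℤ := by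
    rw [Submodule.map_span, ← Set.range_comp]
    exact span_le_restrictScalars ℤ ℚ _
  rw [eq_top_iff, ← (Pi.basisFun ℚ m).span_eq, span_le]
  rintro _ ⟨i, rfl⟩
  obtain ⟨r, hr, hrN⟩ := htorsion (Pi.single i 1)
  have hmem := hcast (Submodule.mem_map_of_mem hrN)
  rw [map_smul, Submodule.restrictScalars_mem, ← Int.cast_smul_eq_zsmul ℚ] at hmem
  have hsingle : castL (Pi.single i 1) = Pi.basisFun ℚ m i := by
    ext k; by_cases hk : k = i <;> simp [castL, hk]
  rw [hsingle] at hmem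
  exact (Submodule.smul_mem_iff _ (Int.cast_ne_zero.mpr hr)).mp hmem

theorem exists_submatrix_det_ne_zero_of_rank_eq_s8 [Fintype ι] (A : Matrix m ι ℤ)
    (h : A.rank = Fintype.card m) : ∃ g : m → ι, (A.submatrix id g).det ≠ 0 := by
  obtain ⟨g, hg⟩ :=
    exists_submatrix_det_ne_zero_of_span_col_eq_top _ (span_col_map_intCast_eq_top A h)
  refine ⟨g, fun h0 => hg ?_⟩
  have hcast : ((A.map (Int.cast : ℤ → ℚ)).submatrix id g).det = ((A.submatrix id g).det : ℚ) :=
    ((Int.castRingHom ℚ).map_det _).symm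
  rw [hcast, h0, Int.cast_zero]

theorem exists_submatrix_abs_det_max [Fintype ι] (A : Matrix m ι ℤ)
    (h : A.rank = Fintype.card m) :
    ∃ g : m → ι, (A.submatrix id g).det ≠ 0 ∧
      ∀ g', |(A.submatrix id g').det| ≤ |(A.submatrix id g).det| := by
  obtain ⟨g₀, hg₀⟩ := A.exists_submatrix_det_ne_zero_of_rank_eq_s8 h
  have : Nonempty (m → ι) := ⟨g₀⟩
  obtain ⟨g, hg⟩ := Finite.exists_max fun g : m → ι => |(A.submatrix id g).det|
  exact ⟨g, abs_pos.mp ((abs_pos.mpr hg₀).trans_le (hg g₀)), hg⟩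

theorem cramer_mulVec {R : Type*} [CommRing R] (B : Matrix m m R) (z : m → R) :
    B.cramer (B *ᵥ z) = B.det • z := by
  rw [cramer_eq_adjugate_mulVec, mulVec_mulVec, adjugate_mul, smul_mulVec, one_mulVec]

theorem cramer_injective {R : Type*} [CommRing R] [IsDomain R] {B : Matrix m m R}
    (hB : B.det ≠ 0) : Function.Injective B.cramer := fun a a' h => by
  have := congrArg (B *ᵥ ·) h
  simp only [mulVec_cramer] at this
  exact smul_right_injective (m → R) hB this

theorem cramer_submatrix_col {R : Type*} [CommRing R] [DecidableEq ι] (A : Matrix m ι R)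
    (g : m → ι) (j : ι) (i : m) :
    (A.submatrix id g).cramer (A.col j) i = (A.submatrix id (Function.update g i j)).det := by
  rw [cramer_apply]
  congr 1
  ext k l
  by_cases hl : l = i
  · subst hl; simp
  · simp [hl]

theorem det_dvd_cramer_sub {R : Type*} [CommRing R] {B : Matrix m m R} {a a' : m → R}
    (h : a - a' ∈ LinearMap.range B.mulVecLin) (i : m) :
    B.det ∣ B.cramer a i - B.cramer a' i := by
  obtain ⟨z, hz⟩ := h
  refine ⟨z i, ?_⟩
  rw [← Pi.sub_apply, ← map_sub, ← hz, mulVecLin_apply, cramer_mulVec, Pi.smul_apply, smul_eq_mul]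

theorem natCard_quotient_range_mulVecLin {B : Matrix m m ℤ} (hB : B.det ≠ 0) :
    Nat.card ((m → ℤ) ⧸ LinearMap.range B.mulVecLin) = B.det.natAbs := by
  rw [← Submodule.natAbs_det_equiv _
      (LinearEquiv.ofInjective _ (mulVec_injective_of_det_ne_zero hB)),
    ← LinearMap.det_toLin' B]
  rfl

theorem card_le_three_pow_mul_natAbs_det [Fintype ι] {B : Matrix m m ℤ}
    (hB : B.det ≠ 0) {a : ι → m → ℤ} (ha : Function.Injective a)
    (hbound : ∀ j i, |B.cramer (a j) i| ≤ |B.det|) :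
    Fintype.card ι ≤ 3 ^ Fintype.card m * B.det.natAbs := by
  set L := LinearMap.range B.mulVecLin
  have hQ := natCard_quotient_range_mulVecLin hB
  have : Finite ((m → ℤ) ⧸ L) :=
    Nat.finite_of_card_ne_zero (by rw [hQ]; exact Int.natAbs_ne_zero.mpr hB)
  have : Fintype ((m → ℤ) ⧸ L) := Fintype.ofFinite _
  let Φ : ι → (m → ℤ) × ((m → ℤ) ⧸ L) :=
    fun j => (fun i => B.cramer (a j) i / |B.det|, L.mkQ (a j))
  let T : Finset ((m → ℤ) × ((m → ℤ) ⧸ L)) :=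
    Fintype.piFinset (fun _ => Finset.Icc (-1) 1) ×ˢ Finset.univ
  have hmaps : Set.MapsTo Φ (Finset.univ : Finset ι) T := fun j _ =>
    Finset.mem_product.mpr ⟨Fintype.mem_piFinset.mpr fun i =>
      Int.ediv_mem_Icc_of_abs_le (abs_pos.mpr hB) (hbound j i), Finset.mem_univ _⟩
  have hinj : Set.InjOn Φ (Finset.univ : Finset ι) := fun j _ j' _ h => by
    obtain ⟨hdiv, hL⟩ := Prod.ext_iff.mp h
    refine ha (cramer_injective hB (funext fun i =>
      Int.eq_of_ediv_eq_of_dvd_sub (congrFun hdiv i) ?_))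
    exact (abs_dvd _ _).mpr (det_dvd_cramer_sub ((Submodule.Quotient.eq L).mp hL) i)
  calc Fintype.card ι = Finset.univ.card := rfl
    _ ≤ T.card := Finset.card_le_card_of_injOn Φ hmaps hinj
    _ = _ := by
      rw [Finset.card_product, Fintype.card_piFinset, Finset.card_univ,
        ← Nat.card_eq_fintype_card, hQ]
      simp

end Matrix

theorem stmt8_general (Δ m : ℕ) :
    ∀ (n : ℕ) (A : Matrix (Fin m) (Fin n) ℤ),
      A.rank = m → DiffCols A → DMod A (Δ : ℤ) → n ≤ 3 ^ m * Δ := by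
  intro n A hrank hdiff hmod
  obtain ⟨g, hB, hmax⟩ := A.exists_submatrix_abs_det_max (by rw [hrank, Fintype.card_fin])
  set B := A.submatrix id g
  have hcols : Function.Injective A.col := fun j j' h =>
    by_contra fun hne => (hdiff.2 j j' hne).1 h
  have hbound : ∀ j i, |B.cramer (A.col j) i| ≤ |B.det| := fun j i => by
    rw [Matrix.cramer_submatrix_col]
    exact hmax _
  have hBΔ : B.det.natAbs ≤ Δ := by
    have := hmod g
    rw [Int.abs_eq_natAbs] at this
    exact_mod_cast this
  calc n = Fintype.card (Fin n) := (Fintype.card_fin n).symm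
    _ ≤ 3 ^ Fintype.card (Fin m) * B.det.natAbs :=
      Matrix.card_le_three_pow_mul_natAbs_det hB hcols hbound
    _ ≤ 3 ^ m * Δ := by
      rw [Fintype.card_fin]
      exact Nat.mul_le_mul_left _ hBΔ

theorem stmt8 (Δ m : ℕ) (hΔ : 1 ≤ Δ) (hm : 1 ≤ m) :
    ∀ (n : ℕ) (A : Matrix (Fin m) (Fin n) ℤ),
      A.rank = m → DiffCols A → DMod A (Δ : ℤ) → n ≤ 3 ^ m * Δ :=
  stmt8_general Δ m
end

section
/- For c ∈ R^n, vectors x* maximizing c over LP = {x ∈ R^n : Ax = b, l ≤ x ≤ u} and z* maximizing c over IP = LP ∩ Z^n, the integrality gap satisfies |cᵀx* − cᵀz*| ≤ π · ‖c‖_∞, where π is the maximum over vertices x of LP of the minimum ℓ₁-distance from x to a point of IP. -/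
theorem stmt16 {m n : ℕ} (A : Matrix (Fin m) (Fin n) ℤ) (b : Fin m → ℤ)
    (l u : Fin n → EReal)
    (hl : ∀ i, l i = ⊥ ∨ ∃ z : ℤ, l i = ((z : ℝ) : EReal))
    (hu : ∀ i, u i = ⊤ ∨ ∃ z : ℤ, u i = ((z : ℝ) : EReal))
    (hlu : ∀ i, l i < u i)
    (hrank : A.rank = m)
    (LP : Set (Fin n → ℝ))
    (hLP : LP = {x | (∀ r, ∑ i, (A r i : ℝ) * x i = (b r : ℝ)) ∧
        ∀ i, l i ≤ ((x i : ℝ) : EReal) ∧ ((x i : ℝ) : EReal) ≤ u i})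
    (IP : Set (Fin n → ℝ))
    (hIP : IP = {x ∈ LP | ∀ i, ∃ z : ℤ, x i = (z : ℝ)})
    (hIPne : IP.Nonempty)
    (π : ℝ)
    (hπ : IsLUB {d : ℝ | ∃ x ∈ Set.extremePoints ℝ LP,
        IsGLB {t : ℝ | ∃ z ∈ IP, t = ∑ i, |x i - z i|} d} π)
    (c xs zs : Fin n → ℝ)
    (hxs : xs ∈ Set.extremePoints ℝ LP)
    (hxsmax : ∀ x ∈ LP, ∑ i, c i * x i ≤ ∑ i, c i * xs i)
    (hzs : zs ∈ IP)
    (hzsmax : ∀ z ∈ IP, ∑ i, c i * z i ≤ ∑ i, c i * zs i) :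
    |(∑ i, c i * xs i) - ∑ i, c i * zs i| ≤ π * ⨆ i, |c i| := by
  set C := ⨆ i, |c i| with hCdef
  have hCnn : 0 ≤ C := Real.iSup_nonneg fun i => abs_nonneg _
  have hcle : ∀ i, |c i| ≤ C := fun i => le_ciSup (f := fun j => |c j|) (Finite.bddAbove_range _) i
  have hzsLP : zs ∈ LP := by rw [hIP] at hzs; exact hzs.1
  have hdiffnn : 0 ≤ (∑ i, c i * xs i) - ∑ i, c i * zs i :=
    sub_nonneg.2 (hxsmax zs hzsLP)
  have key : ∀ z ∈ IP, (∑ i, c i * xs i) - ∑ i, c i * zs i ≤ C * ∑ i, |xs i - z i| := by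
    intro z hz
    have h1 : ∑ i, c i * z i ≤ ∑ i, c i * zs i := hzsmax z hz
    have h2 : (∑ i, c i * xs i) - ∑ i, c i * z i ≤ C * ∑ i, |xs i - z i| := by
      rw [← Finset.sum_sub_distrib, Finset.mul_sum]
      apply Finset.sum_le_sum
      intro i _
      have heq : c i * xs i - c i * z i = c i * (xs i - z i) := by ring
      rw [heq]
      calc c i * (xs i - z i) ≤ |c i * (xs i - z i)| := le_abs_self _
        _ = |c i| * |xs i - z i| := abs_mul _ _
        _ ≤ C * |xs i - z i| := mul_le_mul_of_nonneg_right (hcle i) (abs_nonneg _)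
    linarith
  set S : Set ℝ := {t : ℝ | ∃ z ∈ IP, t = ∑ i, |xs i - z i|} with hSdef
  have hSne : S.Nonempty := by
    obtain ⟨z, hz⟩ := hIPne
    exact ⟨∑ i, |xs i - z i|, z, hz, rfl⟩
  have hSbdd : BddBelow S := by
    refine ⟨0, fun t ht => ?_⟩
    obtain ⟨z, hz, rfl⟩ := ht
    exact Finset.sum_nonneg fun i _ => abs_nonneg _
  have hglb : IsGLB S (sInf S) := Real.isGLB_sInf hSne hSbdd
  have hdpi : sInf S ≤ π := hπ.1 ⟨xs, hxs, hglb⟩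
  rw [abs_of_nonneg hdiffnn]
  rcases eq_or_lt_of_le hCnn with hC0 | hCpos
  · obtain ⟨z, hz⟩ := hIPne
    have := key z hz
    rw [← hC0] at this
    simp at this
    rw [← hC0, mul_zero]; linarith
  · have hlb : ((∑ i, c i * xs i) - ∑ i, c i * zs i) / C ≤ sInf S := by
      apply le_csInf hSne
      intro t ht
      obtain ⟨z, hz, rfl⟩ := ht
      exact (div_le_iff₀' hCpos).2 (key z hz)
    have : ((∑ i, c i * xs i) - ∑ i, c i * zs i) / C ≤ π := le_trans hlb hdpi
    calc (∑ i, c i * xs i) - ∑ i, c i * zs i = ((∑ i, c i * xs i) - ∑ i, c i * zs i) / C * C := by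
          field_simp
      _ ≤ π * C := mul_le_mul_of_nonneg_right this hCnn
end
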